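/- arXiv:2412.00222 — 6 statements merged into one kernel-verified Lean document; each statement's English description precedes it below -/
import Mathlib

section
/- Let α be a finite type with decidable equality, let ℓ : ℕ, and let x, y : Fin ℓ → α. Then the minimum of |D| over all sets D ⊆ Fin ℓ such that x and y p-match after discarding D equals ℓ minus the maximum over all permutations π : Equiv.Perm α of the sum over a ∈ α of w(a, π a). (The minimum is well defined since discarding all ℓ positions always yields a p-match.) -/
/-- `x` and `y` p-match after discarding the set of positions `D`. -/
def pMatchAfterDiscard {α : Type*} {ℓ : ℕ} (x y : Fin ℓ → α) (D : Finset (Fin ℓ)) : Prop :=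
  ∃ π : Equiv.Perm α, ∀ i ∉ D, π (x i) = y i

lemma sum_w_eq {α : Type*} [Fintype α] [DecidableEq α] {ℓ : ℕ} (x y : Fin ℓ → α)
    (π : Equiv.Perm α) :
    ∑ a : α, (Finset.univ.filter (fun i : Fin ℓ => x i = a ∧ y i = π a)).card =
      (Finset.univ.filter (fun i : Fin ℓ => π (x i) = y i)).card := by
  simp only [Finset.card_filter]
  rw [Finset.sum_comm]
  refine Finset.sum_congr rfl fun i _ => ?_
  simp only [ite_and]
  rw [Finset.sum_ite_eq]
  simp [eq_comm]

theorem min_discard_eq_sub_max_matching {α : Type*} [Fintype α] [DecidableEq α] (ℓ : ℕ)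
    (x y : Fin ℓ → α) :
    sInf {m : ℕ | ∃ D : Finset (Fin ℓ), D.card = m ∧ pMatchAfterDiscard x y D} =
      ℓ - Finset.univ.sup (fun π : Equiv.Perm α =>
        ∑ a : α, (Finset.univ.filter (fun i : Fin ℓ => x i = a ∧ y i = π a)).card) := by
  set M := Finset.univ.sup (fun π : Equiv.Perm α =>
    ∑ a : α, (Finset.univ.filter (fun i : Fin ℓ => x i = a ∧ y i = π a)).card) with hM
  -- there is a permutation achieving the sup
  obtain ⟨π₀, -, hπ₀⟩ := Finset.exists_mem_eq_sup (Finset.univ : Finset (Equiv.Perm α))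
    Finset.univ_nonempty (fun π : Equiv.Perm α =>
      ∑ a : α, (Finset.univ.filter (fun i : Fin ℓ => x i = a ∧ y i = π a)).card)
  have hmem : (ℓ - M) ∈ {m : ℕ | ∃ D : Finset (Fin ℓ), D.card = m ∧ pMatchAfterDiscard x y D} := by
    refine ⟨Finset.univ.filter (fun i => ¬ π₀ (x i) = y i), ?_, π₀, ?_⟩
    · have := Finset.card_filter_add_card_filter_not
        (s := (Finset.univ : Finset (Fin ℓ))) (p := fun i => π₀ (x i) = y i)
      have hw := sum_w_eq x y π₀
      simp only [Finset.card_univ, Fintype.card_fin] at this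
      omega
    · intro i hi
      simpa using hi
  apply le_antisymm
  · exact Nat.sInf_le hmem
  · refine le_csInf ⟨_, hmem⟩ ?_
    rintro m ⟨D, hD, π, hπ⟩
    have hsub : Finset.univ.filter (fun i : Fin ℓ => ¬ π (x i) = y i) ⊆ D := by
      intro i hi
      simp only [Finset.mem_filter, Finset.mem_univ, true_and] at hi
      by_contra h
      exact hi (hπ i h)
    have h1 := Finset.card_le_card hsub
    have h2 := Finset.card_filter_add_card_filter_not
      (s := (Finset.univ : Finset (Fin ℓ))) (p := fun i => π (x i) = y i)
    simp only [Finset.card_univ, Fintype.card_fin] at h2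
    have hw := sum_w_eq x y π
    have hle : ∑ a : α, (Finset.univ.filter (fun i : Fin ℓ => x i = a ∧ y i = π a)).card ≤ M :=
      Finset.le_sup (f := fun π : Equiv.Perm α =>
        ∑ a : α, (Finset.univ.filter (fun i : Fin ℓ => x i = a ∧ y i = π a)).card)
        (Finset.mem_univ π)
    omega
end

section
/- Let α be a finite type with decidable equality, let ℓ k : ℕ, and let x, y : Fin ℓ → α. Then x and y p-match with tolerance k if and only if there exists a permutation π : Equiv.Perm α such that the sum over a ∈ α of w(a, π a) is at least ℓ − k. -/
/-- `x` and `y` p-match with tolerance `k`. -/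
def pMatchTol {α : Type*} {ℓ : ℕ} (x y : Fin ℓ → α) (k : ℕ) : Prop :=
  ∃ D : Finset (Fin ℓ), D.card ≤ k ∧ pMatchAfterDiscard x y D

lemma sum_weight_eq {α : Type*} [Fintype α] [DecidableEq α] {ℓ : ℕ}
    (x y : Fin ℓ → α) (π : Equiv.Perm α) :
    ∑ a : α, (Finset.univ.filter (fun i : Fin ℓ => x i = a ∧ y i = π a)).card
      = (Finset.univ.filter (fun i : Fin ℓ => y i = π (x i))).card := by
  rw [Finset.card_eq_sum_card_fiberwise (f := x)
    (t := Finset.univ) (fun i _ => Finset.mem_univ _)]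
  apply Finset.sum_congr rfl
  intro a _
  congr 1
  ext i
  simp only [Finset.mem_filter, Finset.mem_univ, true_and]
  constructor
  · rintro ⟨h1, h2⟩; subst h1; exact ⟨h2, rfl⟩
  · rintro ⟨h1, h2⟩; subst h2; exact ⟨rfl, h1⟩

theorem pMatchTol_iff_exists_perm_weight_ge {α : Type*} [Fintype α] [DecidableEq α]
    (ℓ k : ℕ) (x y : Fin ℓ → α) :
    pMatchTol x y k ↔
      ∃ π : Equiv.Perm α,
        ℓ - k ≤ ∑ a : α,
          (Finset.univ.filter (fun i : Fin ℓ => x i = a ∧ y i = π a)).card := by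
  constructor
  · rintro ⟨D, hD, π, hπ⟩
    refine ⟨π, ?_⟩
    rw [sum_weight_eq]
    have hsub : Finset.univ \ D ⊆ Finset.univ.filter (fun i : Fin ℓ => y i = π (x i)) := by
      intro i hi
      simp only [Finset.mem_sdiff] at hi
      simp only [Finset.mem_filter, Finset.mem_univ, true_and]
      exact (hπ i hi.2).symm
    have := Finset.card_le_card hsub
    have h2 : (Finset.univ \ D).card = ℓ - D.card := by
      rw [Finset.card_sdiff_of_subset (Finset.subset_univ _)]
      simp
    omega
  · rintro ⟨π, hπ⟩
    rw [sum_weight_eq] at hπ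
    set M := Finset.univ.filter (fun i : Fin ℓ => y i = π (x i)) with hM
    refine ⟨Mᶜ, ?_, π, ?_⟩
    · have h1 : Mᶜ.card = ℓ - M.card := by
        rw [Finset.card_compl]; simp
      have h2 : M.card ≤ ℓ := by
        have := Finset.card_le_card (Finset.subset_univ M); simpa using this
      omega
    · intro i hi
      simp only [Finset.mem_compl, not_not, hM, Finset.mem_filter, Finset.mem_univ,
        true_and] at hi
      exact hi.symm
end

section
/- Let α be a type with decidable equality, let n m : ℕ with 1 ≤ m and m ≤ n, let t : Fin n → α, p : Fin m → α, and let a, b : α. Define polynomials P, Q over ℕ by P = Σ_{j < n} (if t j = a then 1 else 0) · X^j and Q = Σ_{j < m} (if p (m − 1 − j) = b then 1 else 0) · X^j. Then for every i ≤ n − m, the coefficient of X^{m − 1 + i} in P · Q equals the number of indices k < m with t (i + k) = a and p k = b. -/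
/-!
Reversing the pattern turns the product into a cross-correlation: the coefficient of
`X ^ (m - 1 + i)` collects exactly the products of the text entry at `i + k` with the pattern
entry at `k`, and a product of two indicators is the indicator of the conjunction.
-/

open Polynomial

section
variable {R : Type*} [Semiring R] {n m : ℕ}

theorem coeff_sum_C_mul_X_pow_mul_sum (u : Fin n → R) (v : Fin m → R) (d : ℕ) :
    ((∑ j : Fin n, C (u j) * X ^ (j : ℕ)) * ∑ k : Fin m, C (v k) * X ^ (k : ℕ)).coeff d =
      ∑ j : Fin n, ∑ k : Fin m, if (j : ℕ) + k = d then u j * v k else 0 := by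
  simp only [Finset.sum_mul_sum, finsetSum_coeff, C_mul_X_pow_eq_monomial, monomial_mul_monomial,
    coeff_monomial]

theorem coeff_mul_sum_rev_eq_sum_mul (u : Fin n → R) (v : Fin m → R) {i : ℕ} (hi : i + m ≤ n) :
    ((∑ j : Fin n, C (u j) * X ^ (j : ℕ)) * ∑ k : Fin m, C (v k.rev) * X ^ (k : ℕ)).coeff
        (m - 1 + i) =
      ∑ k : Fin m, u ⟨i + k, by omega⟩ * v k := by
  rw [coeff_sum_C_mul_X_pow_mul_sum, Finset.sum_comm, ← Equiv.sum_comp Fin.revPerm]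
  refine Fintype.sum_congr _ _ fun k => ?_
  simp only [Fin.revPerm_apply, Fin.rev_rev, Fin.val_rev]
  rw [Fintype.sum_eq_single ⟨i + k, by omega⟩ fun j hj =>
    if_neg fun h => hj (Fin.ext (by simp only; omega))]
  exact if_pos (by simp only; omega)

end

theorem coeff_mul_indicator_polys_eq_alignment_count {α : Type*} [DecidableEq α]
    (n m : ℕ) (hmn : m ≤ n) (t : Fin n → α) (p : Fin m → α) (a b : α) :
    ∀ i : ℕ, ∀ hi : i ≤ n - m,
      ((∑ j : Fin n, C (if t j = a then 1 else 0) * X ^ (j : ℕ)) *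
       (∑ j : Fin m,
          C (if p ⟨m - 1 - (j : ℕ), by have := j.isLt; omega⟩ = b then 1 else 0) *
            X ^ (j : ℕ)) : Polynomial ℕ).coeff (m - 1 + i) =
      (Finset.univ.filter (fun k : Fin m =>
          t ⟨i + (k : ℕ), by have := k.isLt; omega⟩ = a ∧ p k = b)).card := by
  intro i hi
  have p_rev (j : Fin m) : p ⟨m - 1 - j, by omega⟩ = p j.rev :=
    congrArg p (Fin.ext (by simp only [Fin.val_rev]; omega))
  simp only [p_rev]
  rw [coeff_mul_sum_rev_eq_sum_mul _ (fun k => if p k = b then 1 else 0) (by omega),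
    Finset.card_filter]
  simp only [ite_zero_mul_ite_zero, mul_one]
end

section
/- Let α be a finite type with decidable equality, let n : ℕ, and let x, y : Fin n → α. Then E(x) = E(y) if and only if x and y p-match, i.e., there exists a permutation π : Equiv.Perm α with π (x i) = y i for every i. -/
/-- The predecessor occurrence of position `i` in `x`: the largest `j < i`
with `x j = x i`, as an element of `WithBot (Fin n)` (`⊥` when none exists). -/
def prevOcc {α : Type*} [DecidableEq α] {n : ℕ} (x : Fin n → α) (i : Fin n) :
    WithBot (Fin n) :=
  (Finset.univ.filter (fun j : Fin n => j < i ∧ x j = x i)).max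

/-- Baker's encoding of a parameterized string: `E(x) i = i - prev_x(i)` when the
previous occurrence exists, and `0` otherwise. -/
def encode {α : Type*} [DecidableEq α] {n : ℕ} (x : Fin n → α) (i : Fin n) : ℕ :=
  match prevOcc x i with
  | none => 0
  | some j => (i : ℕ) - (j : ℕ)

/-!
Both the encoding and the existence of a renaming permutation depend only on which positions
carry equal symbols. The encoding is equivalent to the predecessor map `prevOcc`, since
`prevOcc x i < i` can be read back from `i - prevOcc x i`; and `prevOcc` recovers all equalities,
because the occurrences of a symbol are chained by it, each pointing to the previous one.
Conversely, if `x` and `y` have the same equality pattern then `x i ↦ y i` is a well-defined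
bijection between the finite sets of symbols they use, which extends to a permutation of `α`.
-/

namespace Equiv.Perm

theorem exists_apply_eq_iff {ι α : Type*} [Finite ι] (x y : ι → α) :
    (∃ π : Perm α, ∀ i, π (x i) = y i) ↔ ∀ i j, x i = x j ↔ y i = y j := by
  constructor
  · rintro ⟨π, hπ⟩ i j
    rw [← hπ i, ← hπ j, π.apply_eq_iff_eq]
  · intro h
    -- `x` and `y` both factor injectively through the quotient by the kernel of `x`.
    let y' : Quotient (Setoid.ker x) → α := Quotient.lift y fun i j hij => (h i j).1 hij
    have hy' : Function.Injective y' := by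
      rintro ⟨i⟩ ⟨j⟩ hij
      exact Quotient.sound ((h i j).2 hij)
    obtain ⟨π, hπ⟩ := exists_extending_pair _ y' (Setoid.kerLift_injective x) hy'
    exact ⟨π, fun i => hπ ⟦i⟧⟩

end Equiv.Perm

section prevOcc

variable {α : Type*} [DecidableEq α] {n : ℕ}

theorem lt_and_eq_of_prevOcc_eq_coe {x : Fin n → α} {i j : Fin n} (h : prevOcc x i = j) :
    j < i ∧ x j = x i := by
  simpa using Finset.mem_of_max h

theorem exists_prevOcc_eq_coe_and_le {x : Fin n → α} {i j : Fin n} (hj : j < i)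
    (hx : x j = x i) :
    ∃ k : Fin n, prevOcc x i = k ∧ j ≤ k := by
  have hmem : j ∈ Finset.univ.filter (fun j : Fin n => j < i ∧ x j = x i) := by simp [hj, hx]
  obtain ⟨k, hk⟩ := Finset.max_of_mem hmem
  exact ⟨k, hk, WithBot.coe_le_coe.1 (hk ▸ Finset.le_max hmem)⟩

theorem prevOcc_congr {x y : Fin n → α} (h : ∀ i j, x i = x j ↔ y i = y j) :
    prevOcc x = prevOcc y := by
  funext i
  simp only [prevOcc, h]

theorem apply_eq_of_prevOcc_eq {x y : Fin n → α} (h : prevOcc x = prevOcc y) {i j : Fin n}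
    (hji : j ≤ i) (hx : x j = x i) : y j = y i := by
  induction i using Fin.strong_induction_on generalizing j with
  | _ i ih =>
    rcases hji.eq_or_lt with rfl | hlt
    · rfl
    obtain ⟨k, hk, hjk⟩ := exists_prevOcc_eq_coe_and_le hlt hx
    obtain ⟨hki, hxk⟩ := lt_and_eq_of_prevOcc_eq_coe hk
    have hyk : y k = y i := (lt_and_eq_of_prevOcc_eq_coe (h ▸ hk)).2
    exact (ih k hki hjk (hx.trans hxk.symm)).trans hyk

theorem prevOcc_eq_iff {x y : Fin n → α} :
    prevOcc x = prevOcc y ↔ ∀ i j, x i = x j ↔ y i = y j := by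
  refine ⟨fun h i j => ?_, prevOcc_congr⟩
  rcases le_total i j with hij | hji
  · exact ⟨apply_eq_of_prevOcc_eq h hij, apply_eq_of_prevOcc_eq h.symm hij⟩
  · exact ⟨fun e => (apply_eq_of_prevOcc_eq h hji e.symm).symm,
      fun e => (apply_eq_of_prevOcc_eq h.symm hji e.symm).symm⟩

end prevOcc

section encode

variable {α : Type*} [DecidableEq α] {n : ℕ}

theorem encode_of_prevOcc_eq_coe {x : Fin n → α} {i j : Fin n} (h : prevOcc x i = j) :
    encode x i = i - j := by
  simp [encode, h]

theorem encode_of_prevOcc_eq_bot {x : Fin n → α} {i : Fin n} (h : prevOcc x i = ⊥) :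
    encode x i = 0 := by
  simp [encode, h]

theorem encode_eq_zero_iff {x : Fin n → α} {i : Fin n} :
    encode x i = 0 ↔ prevOcc x i = ⊥ := by
  induction h : prevOcc x i using WithBot.recBotCoe with
  | bot => simp [encode_of_prevOcc_eq_bot h]
  | coe j =>
    have hji : (j : ℕ) < i := (lt_and_eq_of_prevOcc_eq_coe h).1
    simp only [encode_of_prevOcc_eq_coe h, WithBot.coe_ne_bot, iff_false]
    omega

theorem prevOcc_eq_of_encode_eq {x y : Fin n → α} {i : Fin n} (h : encode x i = encode y i) :
    prevOcc x i = prevOcc y i := by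
  by_cases h0 : encode x i = 0
  · rw [encode_eq_zero_iff.1 h0, encode_eq_zero_iff.1 (h ▸ h0)]
  obtain ⟨j, hj⟩ := WithBot.ne_bot_iff_exists.1 (mt encode_eq_zero_iff.2 h0)
  obtain ⟨k, hk⟩ := WithBot.ne_bot_iff_exists.1 (mt encode_eq_zero_iff.2 (h ▸ h0))
  have hji : (j : ℕ) < i := (lt_and_eq_of_prevOcc_eq_coe hj.symm).1
  have hki : (k : ℕ) < i := (lt_and_eq_of_prevOcc_eq_coe hk.symm).1
  rw [encode_of_prevOcc_eq_coe hj.symm, encode_of_prevOcc_eq_coe hk.symm] at h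
  rw [← hj, ← hk, Fin.ext (by omega : (j : ℕ) = k)]

theorem encode_eq_iff_prevOcc_eq {x y : Fin n → α} :
    encode x = encode y ↔ prevOcc x = prevOcc y :=
  ⟨fun h => funext fun _ => prevOcc_eq_of_encode_eq (congrFun h _), fun h => by
    funext i; simp only [encode, h]⟩

end encode

theorem encode_eq_iff_pMatch_general {α : Type*} [DecidableEq α] (n : ℕ)
    (x y : Fin n → α) :
    encode x = encode y ↔ ∃ π : Equiv.Perm α, ∀ i : Fin n, π (x i) = y i := by
  rw [encode_eq_iff_prevOcc_eq, prevOcc_eq_iff, Equiv.Perm.exists_apply_eq_iff]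

theorem encode_eq_iff_pMatch {α : Type*} [Fintype α] [DecidableEq α] (n : ℕ)
    (x y : Fin n → α) :
    encode x = encode y ↔ ∃ π : Equiv.Perm α, ∀ i : Fin n, π (x i) = y i :=
  encode_eq_iff_pMatch_general n x y
end

section
/- Let α be a type with decidable equality, let n : ℕ, let x, y : Fin n → α, and let i : Fin n be an index with E(x) i ≠ E(y) i. Then prev_x(i) exists or prev_y(i) exists; moreover, if both prev_x(i) and prev_y(i) exist, then prev_x(i) ≠ prev_y(i). -/
lemma encode_eq_of_prevOcc_eq {α β : Type*} [DecidableEq α] [DecidableEq β] {n : ℕ}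
    {x : Fin n → α} {y : Fin n → β} {i : Fin n} (h : prevOcc x i = prevOcc y i) :
    encode x i = encode y i := by
  unfold encode
  rw [h]

theorem prev_exists_of_encode_ne {α : Type*} [DecidableEq α] (n : ℕ)
    (x y : Fin n → α) (i : Fin n) (h : encode x i ≠ encode y i) :
    (prevOcc x i ≠ ⊥ ∨ prevOcc y i ≠ ⊥) ∧
      (prevOcc x i ≠ ⊥ → prevOcc y i ≠ ⊥ → prevOcc x i ≠ prevOcc y i) := by
  have hne : prevOcc x i ≠ prevOcc y i := mt encode_eq_of_prevOcc_eq h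
  refine ⟨?_, fun _ _ => hne⟩
  by_contra! hbot
  exact hne (hbot.1.trans hbot.2.symm)
end

section
/- Let β and γ be finite types with decidable equality, let ℓ k : ℕ, and let x, y : Fin ℓ → (β ⊕ γ). Then x and y p-match with tolerance k with respect to bijections fixing static symbols (i.e., there exist a set D ⊆ Fin ℓ with |D| ≤ k and a permutation π : Equiv.Perm (β ⊕ γ) satisfying π (Sum.inl s) = Sum.inl s for every s : β and π (x i) = y i for every i ∉ D) if and only if the maximum over all permutations σ : Equiv.Perm γ of the quantity (number of indices i with x i = y i and x i in the image of Sum.inl) + Σ_{a ∈ γ} w_p(a, σ a) is at least ℓ − k, where w_p(a, b) denotes the number of indices i with x i = Sum.inr a and y i = Sum.inr b. -/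
lemma key_count {β γ : Type*} [Fintype β] [Fintype γ]
    [DecidableEq β] [DecidableEq γ] (ℓ : ℕ) (x y : Fin ℓ → β ⊕ γ)
    (σ : Equiv.Perm γ) :
    (Finset.univ.filter
        (fun i : Fin ℓ => x i = y i ∧ ∃ s : β, x i = Sum.inl s)).card +
      ∑ a : γ,
        (Finset.univ.filter
            (fun i : Fin ℓ => x i = Sum.inr a ∧ y i = Sum.inr (σ a))).card
    = (Finset.univ.filter
        (fun i : Fin ℓ => Equiv.sumCongr (Equiv.refl β) σ (x i) = y i)).card := by
  simp_rw [Finset.card_filter]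
  rw [Finset.sum_comm, ← Finset.sum_add_distrib]
  refine Finset.sum_congr rfl fun i _ => ?_
  cases hx : x i with
  | inl s => cases hy : y i <;> simp [hx, hy, eq_comm]
  | inr a =>
    cases hy : y i with
    | inl t => simp [hx, hy, -Finset.sum_boole]
    | inr b =>
      simp only [hx, hy, Sum.inr.injEq, Sum.inl.injEq, Equiv.sumCongr_apply,
        Sum.map_inr, reduceCtorEq, false_and, and_false, exists_false,
        if_false, zero_add]
      simp_rw [ite_and]
      rw [Finset.sum_ite_eq]
      simp [eq_comm]


theorem pMatchTol_static_iff_max_matching_ge {β γ : Type*} [Fintype β] [Fintype γ]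
    [DecidableEq β] [DecidableEq γ] (ℓ k : ℕ) (x y : Fin ℓ → β ⊕ γ) :
    (∃ (D : Finset (Fin ℓ)) (π : Equiv.Perm (β ⊕ γ)),
        D.card ≤ k ∧ (∀ s : β, π (Sum.inl s) = Sum.inl s) ∧ ∀ i ∉ D, π (x i) = y i) ↔
      ℓ - k ≤
        Finset.univ.sup (fun σ : Equiv.Perm γ =>
          (Finset.univ.filter
              (fun i : Fin ℓ => x i = y i ∧ ∃ s : β, x i = Sum.inl s)).card +
            ∑ a : γ,
              (Finset.univ.filter
                  (fun i : Fin ℓ => x i = Sum.inr a ∧ y i = Sum.inr (σ a))).card) := by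
  constructor
  · rintro ⟨D, π, hD, hstat, hmatch⟩
    have hinr : ∀ a : γ, ∃ b, π (Sum.inr a) = Sum.inr b := by
      intro a
      cases h : π (Sum.inr a) with
      | inl s => exact absurd (π.injective (h.trans (hstat s).symm)) (by simp)
      | inr b => exact ⟨b, rfl⟩
    choose f hf using hinr
    have hfinj : Function.Injective f := fun a a' h => by
      have := π.injective ((hf a).trans (by rw [h, ← hf a']))
      simpa using this
    let σ : Equiv.Perm γ := Equiv.ofBijective f (Finite.injective_iff_bijective.mp hfinj)
    have hσ : ∀ a, σ a = f a := fun a => rfl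
    have hπ : ∀ v, Equiv.sumCongr (Equiv.refl β) σ v = π v := by
      rintro (s | a)
      · simp [hstat]
      · simp [hσ, hf]
    refine le_trans ?_ (Finset.le_sup (Finset.mem_univ σ))
    rw [key_count]
    have hsub : Dᶜ ⊆ Finset.univ.filter
        (fun i => Equiv.sumCongr (Equiv.refl β) σ (x i) = y i) := by
      intro i hi
      simp only [Finset.mem_compl] at hi
      simp [hπ, hmatch i hi]
    calc ℓ - k ≤ ℓ - D.card := Nat.sub_le_sub_left hD ℓ
      _ = Dᶜ.card := by rw [Finset.card_compl]; simp
      _ ≤ _ := Finset.card_le_card hsub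
  · intro h
    obtain ⟨σ, -, hσ⟩ := Finset.exists_mem_eq_sup Finset.univ
      ⟨1, Finset.mem_univ 1⟩ (fun σ : Equiv.Perm γ =>
        (Finset.univ.filter
            (fun i : Fin ℓ => x i = y i ∧ ∃ s : β, x i = Sum.inl s)).card +
          ∑ a : γ,
            (Finset.univ.filter
                (fun i : Fin ℓ => x i = Sum.inr a ∧ y i = Sum.inr (σ a))).card)
    rw [hσ, key_count] at h
    refine ⟨Finset.univ.filter
        (fun i => ¬ Equiv.sumCongr (Equiv.refl β) σ (x i) = y i),
      Equiv.sumCongr (Equiv.refl β) σ, ?_, fun s => by simp, fun i hi => ?_⟩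
    · have hpn := Finset.card_filter_add_card_filter_not
        (s := (Finset.univ : Finset (Fin ℓ)))
        (p := fun i => Equiv.sumCongr (Equiv.refl β) σ (x i) = y i)
      simp only [Finset.card_univ, Fintype.card_fin] at hpn
      omega
    · simpa using hi
end
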